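/- Let n ≥ 1 and let N > 0 be real. There is a constant C > 0, depending only on n and N, such that for all j, j', j'' ∈ ℤ and all k, k', k'', w, w' ∈ ℤ^n satisfying 0 < j' − j'' ≤ 3, j ≤ j' + 5, |w − w'| > 2^n, Q_{j',k'} ⊆ Q^w_{j,k} and Q_{j'',k''} ⊆ Q^{w'}_{j,k}, one has (1+|2^{j'−j''}k''−k'|)^{−N} ≤ C · 2^{N(j−j')} · (1+|w−w'|)^{−N}. -/

import Mathlib

noncomputable section

open MeasureTheory Real Complex
open scoped ENNReal NNReal

/-- `ℝⁿ` modeled as functions `Fin n → ℝ`. -/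
abbrev Vec (n : ℕ) : Type := Fin n → ℝ

/-- Integer lattice `ℤⁿ`. -/
abbrev IVec (n : ℕ) : Type := Fin n → ℤ

/-- The index set `E_n = {0,1}ⁿ \ {0}`, with `{0,1}ⁿ` modeled as `Fin n → Bool`. -/
abbrev En (n : ℕ) : Type := {ε : Fin n → Bool // ε ≠ fun _ => false}

/-- The Euclidean norm on `Vec n`. -/
def enorm2 {n : ℕ} (x : Vec n) : ℝ := Real.sqrt (∑ i, (x i) ^ 2)

/-- The dyadic cube `Q_{j,k} = {x : 2^j x − k ∈ [0,1)ⁿ}` of side length `2^{−j}`. -/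
def dyadicCube (n : ℕ) (j : ℤ) (k : IVec n) : Set (Vec n) :=
  {x | ∀ i, (k i : ℝ) ≤ (2:ℝ) ^ j * x i ∧ (2:ℝ) ^ j * x i < (k i : ℝ) + 1}

/-- `Q^w_{j,k} = 2^{8−j} w + tilde-Q_{j,k}`, where `tilde-Q_{j,k}` is the unique dyadic
cube of side length `2^{8−j}` containing `Q_{j,k}` (its index is `⌊k/2^8⌋`). -/
def QW (n : ℕ) (j : ℤ) (k w : IVec n) : Set (Vec n) :=
  dyadicCube n (j - 8) (fun i => Int.fdiv (k i) 256 + w i)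

/-!
Evaluate the two inclusions at the lower corners `2^{-j'} k'` and `2^{-j''} k''`. Both
`Q^w_{j,k}` and `Q^{w'}_{j,k}` have generation `j - 8` and indices differing by `w - w'`, so
`|w - w'| ≤ 2^{j-8} |2^{-j'} k' - 2^{-j''} k''| + √n = 2^{j-j'-8} |2^{j'-j''} k'' - k'| + √n`.
Since `2√n ≤ 2^n < |w - w'|`, this gives `1 + |w - w'| ≤ 2^{j-j'} (1 + |2^{j'-j''} k'' - k'|)`,
and the claim holds with `C = 1`.
-/

namespace DyadicCube

variable {n : ℕ}

lemma enorm2_eq_norm (x : Vec n) : enorm2 x = ‖(WithLp.toLp 2 x : EuclideanSpace ℝ (Fin n))‖ := by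
  simp [enorm2, EuclideanSpace.norm_eq]

lemma enorm2_add_le (x y : Vec n) : enorm2 (x + y) ≤ enorm2 x + enorm2 y := by
  simpa only [enorm2_eq_norm, WithLp.toLp_add] using norm_add_le _ _

lemma enorm2_smul (c : ℝ) (x : Vec n) : enorm2 (c • x) = |c| * enorm2 x := by
  rw [enorm2_eq_norm, enorm2_eq_norm, WithLp.toLp_smul, norm_smul, Real.norm_eq_abs]

lemma enorm2_le_sqrt_card {x : Vec n} (hx : ∀ i, |x i| ≤ 1) : enorm2 x ≤ √n :=
  Real.sqrt_le_sqrt <| by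
    simpa using Finset.sum_le_sum (s := Finset.univ) fun i _ =>
      (sq_le_one_iff_abs_le_one (x i)).2 (hx i)

lemma two_mul_sqrt_le_two_pow (n : ℕ) : 2 * √(n : ℝ) ≤ 2 ^ n := by
  rcases n with _ | m
  · simp
  have hm : ((m + 1 : ℕ) : ℝ) ≤ 2 ^ m := by exact_mod_cast m.lt_two_pow_self
  calc 2 * √((m + 1 : ℕ) : ℝ) ≤ 2 * ((m + 1 : ℕ) : ℝ) := by
        gcongr; exact Real.sqrt_le_self_iff.2 (Or.inr (by simp))
    _ ≤ 2 ^ (m + 1) := by rw [pow_succ']; gcongr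

def corner (j : ℤ) (k : IVec n) : Vec n := fun i => (2 : ℝ) ^ (-j) * k i

lemma corner_mem_dyadicCube (j : ℤ) (k : IVec n) : corner j k ∈ dyadicCube n j k := fun i => by
  simp [corner, zpow_neg, mul_inv_cancel_left₀ (zpow_ne_zero j (two_ne_zero' ℝ))]

lemma enorm2_corner_sub_corner (j' j'' : ℤ) (k' k'' : IVec n) :
    enorm2 (corner j' k' - corner j'' k'') =
      (2 : ℝ) ^ (-j') * enorm2 (fun i => (2 : ℝ) ^ (j' - j'') * k'' i - k' i) := by
  have h : corner j' k' - corner j'' k'' =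
      (-(2 : ℝ) ^ (-j')) • fun i => (2 : ℝ) ^ (j' - j'') * k'' i - k' i := by
    ext i
    simp only [corner, Pi.sub_apply, Pi.smul_apply, smul_eq_mul]
    rw [show -j'' = -j' + (j' - j'') by ring, zpow_add₀ (two_ne_zero' ℝ)]
    ring
  rw [h, enorm2_smul, abs_neg, abs_of_pos (by positivity)]

lemma enorm2_index_sub_le {j : ℤ} {a b : IVec n} {x y : Vec n}
    (hx : x ∈ dyadicCube n j a) (hy : y ∈ dyadicCube n j b) :
    enorm2 (fun i => (a i : ℝ) - b i) ≤ 2 ^ j * enorm2 (x - y) + √n := by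
  set u : Vec n := fun i => (a i : ℝ) - b i - 2 ^ j * (x i - y i)
  have hu : ∀ i, |u i| ≤ 1 := fun i => by
    obtain ⟨hx₁, hx₂⟩ := hx i
    obtain ⟨hy₁, hy₂⟩ := hy i
    rw [abs_le]
    constructor <;> simp only [u] <;> linarith
  calc enorm2 (fun i => (a i : ℝ) - b i) = enorm2 ((2 : ℝ) ^ j • (x - y) + u) := by
        congr 1; ext i; simp [u]
    _ ≤ enorm2 ((2 : ℝ) ^ j • (x - y)) + enorm2 u := enorm2_add_le _ _
    _ ≤ 2 ^ j * enorm2 (x - y) + √n := by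
        rw [enorm2_smul, abs_of_pos (by positivity)]
        gcongr
        exact enorm2_le_sqrt_card hu

end DyadicCube

lemma Real.rpow_neg_le_mul_rpow_neg {a b t N : ℝ} (hb : 0 < b) (ht : 0 < t)
    (hN : 0 ≤ N) (h : b ≤ t * a) : a ^ (-N) ≤ t ^ N * b ^ (-N) := by
  have hba : b / t ≤ a := by rwa [div_le_iff₀' ht]
  calc a ^ (-N) ≤ (b / t) ^ (-N) :=
        Real.rpow_le_rpow_of_nonpos (div_pos hb ht) hba (neg_nonpos.2 hN)
    _ = t ^ N * b ^ (-N) := by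
        rw [Real.div_rpow hb.le ht.le, Real.rpow_neg ht.le, div_inv_eq_mul, mul_comm]

open DyadicCube in
theorem statement7_general (n : ℕ) (N : ℝ) (hN : 0 < N) :
    ∃ C : ℝ, 0 < C ∧ ∀ (j j' j'' : ℤ) (k k' k'' w w' : IVec n),
      0 < j' - j'' → j' - j'' ≤ 3 → j ≤ j' + 5 →
      (2:ℝ) ^ n < enorm2 (fun i => (w i : ℝ) - (w' i : ℝ)) →
      dyadicCube n j' k' ⊆ QW n j k w →
      dyadicCube n j'' k'' ⊆ QW n j k w' →
      (1 + enorm2 (fun i => (2:ℝ) ^ (j' - j'') * (k'' i : ℝ) - (k' i : ℝ))) ^ (-N) ≤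
        C * (2:ℝ) ^ (N * ((j : ℝ) - (j' : ℝ))) *
          (1 + enorm2 (fun i => (w i : ℝ) - (w' i : ℝ))) ^ (-N) := by
  refine ⟨1, one_pos, fun j j' j'' k k' k'' w w' _ _ _ hw hQ' hQ'' => ?_⟩
  set A := enorm2 fun i => (2 : ℝ) ^ (j' - j'') * (k'' i : ℝ) - k' i
  set B := enorm2 fun i => (w i : ℝ) - w' i
  set t : ℝ := 2 ^ (j - j')
  have hB : B ≤ t / 256 * A + √n := by
    have h := enorm2_index_sub_le (hQ' (corner_mem_dyadicCube j' k'))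
      (hQ'' (corner_mem_dyadicCube j'' k''))
    simp only [Int.cast_add, add_sub_add_left_eq_sub, enorm2_corner_sub_corner] at h
    have h256 : (2 : ℝ) ^ (j - 8) * 2 ^ (-j') = t / 256 := by
      rw [← zpow_add₀ (two_ne_zero' ℝ), show j - 8 + -j' = j - j' - 8 by ring,
        zpow_sub₀ (two_ne_zero' ℝ)]
      norm_num [t]
    rwa [← mul_assoc, h256] at h
  have hsqrt := two_mul_sqrt_le_two_pow n
  have hone : (1 : ℝ) ≤ 2 ^ n := one_le_pow₀ one_le_two
  have ht : 0 < t := by positivity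
  have hBt : 1 + B ≤ t * (1 + A) := by linarith
  rw [one_mul, mul_comm N, Real.rpow_mul zero_le_two,
    show ((j : ℝ) - j') = ((j - j' : ℤ) : ℝ) by push_cast; ring, Real.rpow_intCast]
  exact Real.rpow_neg_le_mul_rpow_neg (by linarith) ht hN.le hBt

/-- if `0 < j'−j'' ≤ 3`, `j ≤ j'+5`, `|w−w'| > 2^n`, `Q_{j',k'} ⊆ Q^w_{j,k}` and
`Q_{j'',k''} ⊆ Q^{w'}_{j,k}` then `(1+|2^{j'−j''}k''−k'|)^{−N} ≤ C 2^{N(j−j')} (1+|w−w'|)^{−N}`. -/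
theorem statement7 (n : ℕ) (hn : 1 ≤ n) (N : ℝ) (hN : 0 < N) :
    ∃ C : ℝ, 0 < C ∧ ∀ (j j' j'' : ℤ) (k k' k'' w w' : IVec n),
      0 < j' - j'' → j' - j'' ≤ 3 → j ≤ j' + 5 →
      (2:ℝ) ^ n < enorm2 (fun i => (w i : ℝ) - (w' i : ℝ)) →
      dyadicCube n j' k' ⊆ QW n j k w →
      dyadicCube n j'' k'' ⊆ QW n j k w' →
      (1 + enorm2 (fun i => (2:ℝ) ^ (j' - j'') * (k'' i : ℝ) - (k' i : ℝ))) ^ (-N) ≤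
        C * (2:ℝ) ^ (N * ((j : ℝ) - (j' : ℝ))) *
          (1 + enorm2 (fun i => (w i : ℝ) - (w' i : ℝ))) ^ (-N) :=
  statement7_general n N hN
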